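/- arXiv:2006.09355 — 4 statements merged into one kernel-verified Lean document; each statement's English description precedes it below -/
import Mathlib

section
/- Let (Ω₁, P₁) be a probability space, μ_X a Borel probability measure on ℝ^d with bounded support, φ : ℝ → ℝ a bounded continuous activation such that the span of {x ↦ φ(⟨u, x⟩) : u ∈ ℝ^d} is dense in L²(μ_X), and let w : Ω₁ → ℝ^d be a random variable with supp(law(w)) = ℝ^d. If g ∈ L²(μ_X) satisfies ∫ g(x) φ(⟨w(c₁), x⟩) dμ_X(x) = 0 for P₁-almost every c₁, then g = 0 in L²(μ_X). -/
open MeasureTheory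
open scoped RealInnerProductSpace

/-!
The function `h u = ∫ g x φ ⟪u, x⟫ dμX` is continuous in `u` by dominated convergence, since `φ`
is bounded and `g ∈ L² ⊆ L¹` on a probability space. It vanishes almost everywhere for the law of
`w`, which charges every nonempty open set, so `h` vanishes identically. Thus `g` is orthogonal to
every feature `φ ⟪u, ·⟫`, hence to their span, which is dense in `L²(μX)`; so `g = 0`.
-/

theorem Submodule.eq_zero_of_dense_span_of_inner_eq_zero {𝕜 E : Type*} [RCLike 𝕜]
    [NormedAddCommGroup E] [InnerProductSpace 𝕜 E] {S : Set E}
    (hS : Dense (span 𝕜 S : Set E)) {x : E} (h : ∀ v ∈ S, inner 𝕜 v x = 0) : x = 0 :=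
  hS.eq_zero_of_inner_right 𝕜 fun _ hv =>
    mem_orthogonal_singleton_iff_inner_left.1 <|
      span_le.2 (fun u hu => mem_orthogonal_singleton_iff_inner_left.2 (h u hu)) hv

theorem Continuous.eq_of_ae_eq_comp {Ω X Y : Type*} [MeasurableSpace Ω] [TopologicalSpace X]
    [MeasurableSpace X] [OpensMeasurableSpace X] [TopologicalSpace Y] [T2Space Y]
    {P : Measure Ω} {w : Ω → X} (hw : AEMeasurable w P) [(P.map w).IsOpenPosMeasure]
    {f g : X → Y} (hf : Continuous f) (hg : Continuous g)
    (h : ∀ᵐ c ∂P, f (w c) = g (w c)) : f = g :=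
  (hf.ae_eq_iff_eq (P.map w) hg).1 <|
    (ae_map_iff hw (isClosed_eq hf hg).measurableSet).2 h

theorem continuous_integral_mul_comp_inner {E : Type*} [NormedAddCommGroup E]
    [InnerProductSpace ℝ E] [MeasurableSpace E] [OpensMeasurableSpace E] {μ : Measure E}
    {g : E → ℝ} (hg : Integrable g μ) {φ : ℝ → ℝ} (hφc : Continuous φ) {C : ℝ}
    (hC : ∀ s, |φ s| ≤ C) :
    Continuous fun u => ∫ x, g x * φ ⟪u, x⟫ ∂μ := by
  refine continuous_of_dominated (bound := fun x => C * |g x|) (fun u => ?_) (fun u => ?_)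
    (hg.abs.const_mul C) (.of_forall fun x => ?_)
  · exact hg.aestronglyMeasurable.mul
      (hφc.comp (continuous_const.inner continuous_id)).aestronglyMeasurable
  · refine .of_forall fun x => ?_
    rw [Real.norm_eq_abs, abs_mul, mul_comm]
    exact mul_le_mul_of_nonneg_right (hC _) (abs_nonneg _)
  · exact continuous_const.mul (hφc.comp (continuous_id.inner continuous_const))

theorem orthogonal_to_random_features_eq_zero_general
    {Ω₁ : Type*} [MeasureSpace Ω₁] (P₁ : Measure Ω₁)
    (d : ℕ) (μX : Measure (EuclideanSpace ℝ (Fin d))) [IsProbabilityMeasure μX]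
    (φ : ℝ → ℝ) (hφc : Continuous φ) (hφb : ∃ C : ℝ, ∀ s, |φ s| ≤ C)
    (hUAP : Dense (↑(Submodule.span ℝ
      {F : Lp ℝ 2 μX | ∃ u : EuclideanSpace ℝ (Fin d),
        (F : EuclideanSpace ℝ (Fin d) → ℝ) =ᵐ[μX] fun x => φ ⟪u, x⟫}) :
        Set (Lp ℝ 2 μX)))
    (w : Ω₁ → EuclideanSpace ℝ (Fin d)) (hw : Measurable w)
    (hsupp : ∀ U : Set (EuclideanSpace ℝ (Fin d)), IsOpen U → U.Nonempty →
      0 < (P₁.map w) U)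
    (g : Lp ℝ 2 μX)
    (horth : ∀ᵐ c₁ ∂P₁, ∫ x, g x * φ ⟪w c₁, x⟫ ∂μX = 0) :
    g = 0 := by
  obtain ⟨C, hC⟩ := hφb
  have : (P₁.map w).IsOpenPosMeasure := ⟨fun U hU hne => (hsupp U hU hne).ne'⟩
  have hcont := continuous_integral_mul_comp_inner
    ((Lp.memLp g).integrable one_le_two) hφc hC
  have hzero : (fun u => ∫ x, g x * φ ⟪u, x⟫ ∂μX) = 0 :=
    hcont.eq_of_ae_eq_comp hw.aemeasurable continuous_const horth
  refine Submodule.eq_zero_of_dense_span_of_inner_eq_zero hUAP ?_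
  rintro F ⟨u, hFu⟩
  calc ⟪F, g⟫ = ∫ x, g x * φ ⟪u, x⟫ ∂μX := by
        rw [L2.inner_def]
        refine integral_congr_ae ?_
        filter_upwards [hFu] with x hx
        simp [hx, mul_comm]
    _ = 0 := congrFun hzero u

/-- universal approximation plus full support of the first-layer
weights forces an orthogonal `g` to vanish. -/
theorem orthogonal_to_random_features_eq_zero
    {Ω₁ : Type*} [MeasureSpace Ω₁] (P₁ : Measure Ω₁) [IsProbabilityMeasure P₁]
    (d : ℕ) (μX : Measure (EuclideanSpace ℝ (Fin d))) [IsProbabilityMeasure μX]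
    (R : ℝ) (hbdd : ∀ᵐ x ∂μX, ‖x‖ ≤ R)
    (φ : ℝ → ℝ) (hφc : Continuous φ) (hφb : ∃ C : ℝ, ∀ s, |φ s| ≤ C)
    (hUAP : Dense (↑(Submodule.span ℝ
      {F : Lp ℝ 2 μX | ∃ u : EuclideanSpace ℝ (Fin d),
        (F : EuclideanSpace ℝ (Fin d) → ℝ) =ᵐ[μX] fun x => φ ⟪u, x⟫}) :
        Set (Lp ℝ 2 μX)))
    (w : Ω₁ → EuclideanSpace ℝ (Fin d)) (hw : Measurable w)
    (hsupp : ∀ U : Set (EuclideanSpace ℝ (Fin d)), IsOpen U → U.Nonempty →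
      0 < (P₁.map w) U)
    (g : Lp ℝ 2 μX)
    (horth : ∀ᵐ c₁ ∂P₁, ∫ x, g x * φ ⟪w c₁, x⟫ ∂μX = 0) :
    g = 0 :=
  orthogonal_to_random_features_eq_zero_general P₁ d μX φ hφc hφb hUAP w hw hsupp g horth
end

section
/- Let (Ω, P) be a probability space, μ_X a Borel probability measure on a measurable space 𝒳, φ : ℝ → ℝ bounded and continuous such that the span of {φ ∘ h : h ∈ L²(μ_X)} is dense in L²(μ_X) (φ is non-obstructive). Let H : 𝒳 × Ω → ℝ be such that c ↦ H(·, c) defines a random element of L²(μ_X) whose law has full support in L²(μ_X). If g ∈ L²(μ_X) satisfies ∫ g(x) φ(H(x, c)) dμ_X(x) = 0 for P-almost every c, then g = 0. -/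
/-!
The functional `h ↦ ∫ g · φ(h) dμ` is continuous on `L²(μ)`: along a sequence converging in `L²`,
every subsequence has a further subsequence converging almost everywhere, and there dominated
convergence applies because `φ` is bounded and continuous. By hypothesis the functional vanishes
at `H(·, c)` for almost every `c`, so by full support on a dense set, hence everywhere. Thus `g` is
orthogonal to every `φ ∘ h`, hence to their dense span, and `g = 0`.
-/

open MeasureTheory Filter Topology
open scoped ENNReal

section

variable {α E : Type*} [MeasurableSpace α] {μ : Measure α} [NormedAddCommGroup E]
  {φ : E → ℝ} {C : ℝ} {g : α → ℝ}

theorem tendsto_integral_mul_comp_of_tendstoInMeasure {f : ℕ → α → E} {f₀ : α → E}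
    (hφ : Continuous φ) (hC : ∀ y, |φ y| ≤ C) (hg : Integrable g μ)
    (hf : ∀ n, AEStronglyMeasurable (f n) μ) (hff₀ : TendstoInMeasure μ f atTop f₀) :
    Tendsto (fun n => ∫ x, g x * φ (f n x) ∂μ) atTop (𝓝 (∫ x, g x * φ (f₀ x) ∂μ)) := by
  refine tendsto_of_subseq_tendsto fun ns hns => ?_
  obtain ⟨ms, -, hms⟩ := (hff₀.comp hns).exists_seq_tendsto_ae
  refine ⟨ms, tendsto_integral_of_dominated_convergence (fun x => C * |g x|)
    (fun n => hg.aestronglyMeasurable.mul (hφ.comp_aestronglyMeasurable (hf _)))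
    (hg.abs.const_mul C) (fun n => ?_) ?_⟩
  · filter_upwards with x
    rw [Real.norm_eq_abs, abs_mul, mul_comm]
    exact mul_le_mul_of_nonneg_right (hC _) (abs_nonneg _)
  · filter_upwards [hms] with x hx
    exact tendsto_const_nhds.mul ((hφ.tendsto _).comp hx)

theorem continuous_integral_mul_comp_Lp {p : ℝ≥0∞} [Fact (1 ≤ p)]
    (hφ : Continuous φ) (hC : ∀ y, |φ y| ≤ C) (hg : Integrable g μ) :
    Continuous fun h : Lp E p μ => ∫ x, g x * φ (h x) ∂μ :=
  continuous_iff_seqContinuous.2 fun _ _ hh =>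
    tendsto_integral_mul_comp_of_tendstoInMeasure hφ hC hg (fun _ => Lp.aestronglyMeasurable _)
      (tendstoInMeasure_of_tendsto_Lp hh)

end

theorem dense_of_ae_mem_of_forall_measure_ball_pos {Ω X : Type*} [MeasurableSpace Ω]
    [PseudoMetricSpace X] {P : Measure Ω} {Y : Ω → X}
    (hY : ∀ x, ∀ δ > 0, 0 < P {c | dist (Y c) x < δ}) {S : Set X} (hS : ∀ᵐ c ∂P, Y c ∈ S) :
    Dense S := by
  refine fun x => Metric.mem_closure_iff.2 fun δ hδ => ?_
  obtain ⟨c, hcS, hcx⟩ := (hS.and_frequently (frequently_ae_iff.2 (hY x δ hδ).ne')).exists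
  exact ⟨Y c, hcS, by rwa [dist_comm]⟩

theorem eq_zero_of_inner_left_of_dense_span {𝕜 E : Type*} [RCLike 𝕜] [NormedAddCommGroup E]
    [InnerProductSpace 𝕜 E] {s : Set E} (hs : Dense (Submodule.span 𝕜 s : Set E)) {x : E}
    (h : ∀ u ∈ s, inner 𝕜 x u = 0) : x = 0 :=
  hs.eq_zero_of_inner_left 𝕜 fun _ hv => LinearMap.eqOn_span' (f := innerₛₗ 𝕜 x) (g := 0) h hv

theorem nonobstructive_full_support_orthogonal_eq_zero_general
    {Ω : Type*} [MeasureSpace Ω] (P : Measure Ω)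
    {𝒳 : Type*} [MeasurableSpace 𝒳] (μX : Measure 𝒳) [IsProbabilityMeasure μX]
    (φ : ℝ → ℝ) (hφc : Continuous φ) (hφb : ∃ C : ℝ, ∀ s, |φ s| ≤ C)
    (hnonobs : Dense (↑(Submodule.span ℝ
      {F : Lp ℝ 2 μX | ∃ h : Lp ℝ 2 μX,
        (F : 𝒳 → ℝ) =ᵐ[μX] fun x => φ (h x)}) : Set (Lp ℝ 2 μX)))
    (HC : Ω → Lp ℝ 2 μX)
    (hsupp : ∀ h : Lp ℝ 2 μX, ∀ δ > (0:ℝ), 0 < P {c | ‖HC c - h‖ < δ})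
    (g : Lp ℝ 2 μX)
    (horth : ∀ᵐ c ∂P, ∫ x, g x * φ (HC c x) ∂μX = 0) :
    g = 0 := by
  obtain ⟨C, hC⟩ := hφb
  have hΦ : Continuous fun h : Lp ℝ 2 μX => ∫ x, g x * φ (h x) ∂μX :=
    continuous_integral_mul_comp_Lp hφc hC ((Lp.memLp g).integrable one_le_two)
  have hdense : Dense {h : Lp ℝ 2 μX | ∫ x, g x * φ (h x) ∂μX = 0} :=
    dense_of_ae_mem_of_forall_measure_ball_pos (by simpa only [dist_eq_norm] using hsupp) horth
  have hΦ_eq_zero := hΦ.ext_on hdense continuous_const fun _ hh => hh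
  refine eq_zero_of_inner_left_of_dense_span hnonobs ?_
  rintro F ⟨h, hF⟩
  rw [L2.inner_def, ← congr_fun hΦ_eq_zero h]
  refine integral_congr_ae ?_
  filter_upwards [hF] with x hx
  simp [hx, mul_comm]

/-- if `φ` is bounded continuous and non-obstructive, and the
random pre-activation `c ↦ H(·,c)` has full support in `L²(μX)`, then any `g`
orthogonal to `φ(H(·,c))` for almost every `c` vanishes.  Full support of the
law of `HC` is expressed by positivity of the probability of every ball. -/
theorem nonobstructive_full_support_orthogonal_eq_zero
    {Ω : Type*} [MeasureSpace Ω] (P : Measure Ω) [IsProbabilityMeasure P]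
    {𝒳 : Type*} [MeasurableSpace 𝒳] (μX : Measure 𝒳) [IsProbabilityMeasure μX]
    (φ : ℝ → ℝ) (hφc : Continuous φ) (hφb : ∃ C : ℝ, ∀ s, |φ s| ≤ C)
    (hnonobs : Dense (↑(Submodule.span ℝ
      {F : Lp ℝ 2 μX | ∃ h : Lp ℝ 2 μX,
        (F : 𝒳 → ℝ) =ᵐ[μX] fun x => φ (h x)}) : Set (Lp ℝ 2 μX)))
    (HC : Ω → Lp ℝ 2 μX)
    (hsupp : ∀ h : Lp ℝ 2 μX, ∀ δ > (0:ℝ), 0 < P {c | ‖HC c - h‖ < δ})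
    (g : Lp ℝ 2 μX)
    (horth : ∀ᵐ c ∂P, ∫ x, g x * φ (HC c x) ∂μX = 0) :
    g = 0 :=
  nonobstructive_full_support_orthogonal_eq_zero_general P μX φ hφc hφb hnonobs HC hsupp g horth
end

section
/- Let φ : ℝ → ℝ be bounded, continuous, and non-constant. Then for any probability measure μ on a measurable space, the set {φ ∘ f : f ∈ L²(μ), f measurable and real-valued} has dense linear span in L²(μ). -/
/-!
If `φ a ≠ φ b`, composing `φ` with the two-valued function equal to `b` on `s` and to `a` off `s`
gives `φ a + (φ b - φ a) 𝟙_s`. Taking `s = ∅` shows that the constant `φ a` lies in the span,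
hence so does every multiple of every indicator `𝟙_s`; and linear combinations of
indicators, i.e. simple functions, are dense in `L²(μ)`.
-/

open MeasureTheory Set
open scoped ENNReal

namespace MeasureTheory

variable {α E : Type*} [MeasurableSpace α] {μ : Measure α} [NormedAddCommGroup E] {p : ℝ≥0∞}

theorem indicatorConstLp_smul {𝕜 : Type*} [NormedRing 𝕜] [Module 𝕜 E] [IsBoundedSMul 𝕜 E]
    [Fact (1 ≤ p)] {s : Set α} (hs : MeasurableSet s) (hμs : μ s ≠ ∞) (r : 𝕜) (c : E) :
    indicatorConstLp p hs hμs (r • c) = r • indicatorConstLp p hs hμs c := by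
  apply Lp.ext
  filter_upwards [indicatorConstLp_coeFn (p := p) (hs := hs) (hμs := hμs) (c := r • c),
    indicatorConstLp_coeFn (p := p) (hs := hs) (hμs := hμs) (c := c),
    Lp.coeFn_smul r (indicatorConstLp p hs hμs c)] with x hrc hc hsmul
  rw [hrc, hsmul, Pi.smul_apply, hc, indicator_const_smul_apply]

theorem indicatorConstLp_sub_add_const_ae_eq_piecewise [IsFiniteMeasure μ] [Fact (1 ≤ p)]
    {s : Set α} [DecidablePred (· ∈ s)] (hs : MeasurableSet s) (c d : E) :
    ⇑(indicatorConstLp p hs (measure_ne_top μ s) (d - c) + Lp.const p μ c)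
      =ᵐ[μ] s.piecewise (fun _ => d) (fun _ => c) := by
  filter_upwards [Lp.coeFn_add (indicatorConstLp p hs (measure_ne_top μ s) (d - c))
      (Lp.const p μ c), indicatorConstLp_coeFn (p := p) (hs := hs) (μ := μ) (c := d - c),
    Lp.coeFn_const (p := p) (μ := μ) (c := c)] with x hadd hind hconst
  rw [hadd, Pi.add_apply, hind, hconst]
  by_cases hx : x ∈ s <;> simp [hx]

namespace Lp

theorem dense_of_indicatorConstLp_mem {𝕜 : Type*} [NormedRing 𝕜] [Module 𝕜 E]
    [IsBoundedSMul 𝕜 E] [Fact (1 ≤ p)] (hp : p ≠ ∞) {V : Submodule 𝕜 (Lp E p μ)}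
    (hV : ∀ (s : Set α) (hs : MeasurableSet s) (hμs : μ s ≠ ∞) (c : E),
      indicatorConstLp p hs hμs c ∈ V) :
    Dense (V : Set (Lp E p μ)) := by
  refine Submodule.dense_iff_topologicalClosure_eq_top.2 <| Submodule.eq_top_iff'.2 <|
    Lp.induction hp _ (fun c s hs hμs => ?_) (fun _ _ _ _ _ hf hg => add_mem hf hg)
      V.isClosed_topologicalClosure
  rw [Lp.simpleFunc.coe_indicatorConst]
  exact V.le_topologicalClosure (hV s hs hμs.ne c)

theorem dense_of_indicatorConstLp_mem_of_ne_zero {𝕜 : Type*} [NormedField 𝕜] [Fact (1 ≤ p)]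
    (hp : p ≠ ∞) {V : Submodule 𝕜 (Lp 𝕜 p μ)} {c₀ : 𝕜} (hc₀ : c₀ ≠ 0)
    (hV : ∀ (s : Set α) (hs : MeasurableSet s) (hμs : μ s ≠ ∞),
      indicatorConstLp p hs hμs c₀ ∈ V) :
    Dense (V : Set (Lp 𝕜 p μ)) := by
  refine dense_of_indicatorConstLp_mem hp fun s hs hμs c => ?_
  have hc : c = (c / c₀) • c₀ := by rw [smul_eq_mul, div_mul_cancel₀ c hc₀]
  rw [hc, indicatorConstLp_smul]
  exact V.smul_mem _ (hV s hs hμs)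

end Lp

end MeasureTheory

theorem bounded_continuous_nonconstant_nonobstructive_general
    (φ : ℝ → ℝ)
    (hφnc : ∃ s t : ℝ, φ s ≠ φ t)
    {α : Type*} [MeasurableSpace α] (μ : Measure α) [IsProbabilityMeasure μ] :
    Dense (↑(Submodule.span ℝ
      {F : Lp ℝ 2 μ | ∃ f : α → ℝ, Measurable f ∧ MemLp f 2 μ ∧
        (F : α → ℝ) =ᵐ[μ] fun x => φ (f x)}) : Set (Lp ℝ 2 μ)) := by
  classical
  obtain ⟨b, a, hab⟩ := hφnc
  set V := Submodule.span ℝ {F : Lp ℝ 2 μ | ∃ f : α → ℝ, Measurable f ∧ MemLp f 2 μ ∧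
    (F : α → ℝ) =ᵐ[μ] fun x => φ (f x)}
  have comp_piecewise_mem (s : Set α) (hs : MeasurableSet s) :
      indicatorConstLp 2 hs (measure_ne_top μ s) (φ b - φ a) + Lp.const 2 μ (φ a) ∈ V :=
    Submodule.subset_span ⟨s.piecewise (fun _ => b) (fun _ => a),
      measurable_const.piecewise hs measurable_const,
      memLp_const _ |>.piecewise hs (memLp_const _),
      (indicatorConstLp_sub_add_const_ae_eq_piecewise hs _ _).trans
        (.of_forall fun x => (s.apply_piecewise _ _ (fun _ => φ)).symm)⟩
  refine Lp.dense_of_indicatorConstLp_mem_of_ne_zero ENNReal.ofNat_ne_top (sub_ne_zero.2 hab)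
    fun s hs _ => ?_
  simpa [indicatorConstLp_empty] using
    sub_mem (comp_piecewise_mem s hs) (comp_piecewise_mem ∅ .empty)

/-- a bounded continuous non-constant activation is
non-obstructive: `{φ ∘ f : f ∈ L²(μ)}` has dense linear span in `L²(μ)`. -/
theorem bounded_continuous_nonconstant_nonobstructive
    (φ : ℝ → ℝ) (hφc : Continuous φ) (hφb : ∃ C : ℝ, ∀ s, |φ s| ≤ C)
    (hφnc : ∃ s t : ℝ, φ s ≠ φ t)
    {α : Type*} [MeasurableSpace α] (μ : Measure α) [IsProbabilityMeasure μ] :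
    Dense (↑(Submodule.span ℝ
      {F : Lp ℝ 2 μ | ∃ f : α → ℝ, Measurable f ∧ MemLp f 2 μ ∧
        (F : α → ℝ) =ᵐ[μ] fun x => φ (f x)}) : Set (Lp ℝ 2 μ)) :=
  bounded_continuous_nonconstant_nonobstructive_general φ hφnc μ
end

section
/- Consider the two-layer mean-field quantities: given a probability space (Ω₁, P₁), weights w₁ : Ω₁ → ℝ^d, w₂ : Ω₁ → ℝ, a bounded continuous activation φ₁ with universal approximation property (span{φ₁(⟨u,·⟩) : u ∈ ℝ^d} dense in L²(μ_X)), and supp(law(w₁(C₁))) = ℝ^d. Define 𝓗₂(f)(x) = E_{C₁}[f(C₁) φ₁(⟨w₁(C₁), x⟩)] for f ∈ L²(P₁). Then the closure of {𝓗₂(f) : f ∈ L²(P₁)} in L²(μ_X) equals L²(μ_X). -/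
open MeasureTheory Set Filter Topology
open scoped RealInnerProductSpace ENNReal

/-!
The range of `𝓗₂` is a linear subspace, so it suffices to put each ridge function
`φ₁ ⟪u, ·⟫` of the dense spanning family into its closure. For a small open neighbourhood `U`
of `u`, take `f` to be the normalised indicator of `w₁ ⁻¹' U`: full support of the law of `w₁`
makes this set non-null, and `𝓗₂ f x` is then the average of `φ₁ ⟪w₁ c, x⟫` over it. Since
`μ_X` lives on a compact set, on which `v ↦ φ₁ ⟪v, ·⟫` is uniformly continuous, this average is
uniformly close to `φ₁ ⟪u, x⟫`.
-/

namespace MeasureTheory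

variable {Ω α : Type*} [MeasurableSpace Ω] [MeasurableSpace α]

/-- For `k c x = φ₁ ⟪w₁ c, x⟫` this is the range of the paper's `𝓗₂`. The hypothesis `hk` keeps
the integrals away from their junk value `0`, which is what makes the carrier a subspace. -/
def kernelRange (P : Measure Ω) (μ : Measure α) (k : Ω → α → ℝ)
    (hk : ∀ x, MemLp (fun c => k c x) 2 P) : Submodule ℝ (Lp ℝ 2 μ) where
  carrier := {F | ∃ f : Ω → ℝ, MemLp f 2 P ∧ F =ᵐ[μ] fun x => ∫ c, f c * k c x ∂P}
  add_mem' := by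
    rintro F G ⟨f, hf, hF⟩ ⟨g, hg, hG⟩
    refine ⟨f + g, hf.add hg, ?_⟩
    filter_upwards [Lp.coeFn_add F G, hF, hG] with x hFG hFx hGx
    simp only [hFG, Pi.add_apply, hFx, hGx, add_mul]
    exact (integral_add (hf.integrable_mul (hk x)) (hg.integrable_mul (hk x))).symm
  zero_mem' := by
    refine ⟨0, MemLp.zero, ?_⟩
    filter_upwards [Lp.coeFn_zero ℝ 2 μ] with x hx
    simpa using hx
  smul_mem' := by
    rintro a F ⟨f, hf, hF⟩
    refine ⟨a • f, hf.const_smul a, ?_⟩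
    filter_upwards [Lp.coeFn_smul a F, hF] with x haF hFx
    simp only [haF, Pi.smul_apply, smul_eq_mul, hFx, mul_assoc, integral_const_mul]

theorem mem_kernelRange_of_ae_eq_setAverage {P : Measure Ω} {μ : Measure α} {k : Ω → α → ℝ}
    (hk : ∀ x, MemLp (fun c => k c x) 2 P) {A : Set Ω} (hA : MeasurableSet A) (hPA : P A ≠ ⊤)
    {F : Lp ℝ 2 μ} (hF : F =ᵐ[μ] fun x => ⨍ c in A, k c x ∂P) :
    F ∈ kernelRange P μ k hk := by
  refine ⟨A.indicator fun _ => (P.real A)⁻¹, memLp_indicator_const 2 hA _ (Or.inr hPA), ?_⟩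
  filter_upwards [hF] with x hFx
  rw [hFx, setAverage_eq, smul_eq_mul, ← integral_const_mul, ← integral_indicator hA]
  congr 1 with c
  exact indicator_mul_left A _ fun c => k c x

theorem dist_setAverage_le {E : Type*} [NormedAddCommGroup E] [NormedSpace ℝ E] [CompleteSpace E]
    {P : Measure Ω} {A : Set Ω} (hA : MeasurableSet A) (hPA₀ : P A ≠ 0) (hPA : P A ≠ ⊤)
    {g : Ω → E} (hg : IntegrableOn g A P) {a : E} {ε : ℝ}
    (hga : ∀ c ∈ A, dist (g c) a ≤ ε) :
    dist (⨍ c in A, g c ∂P) a ≤ ε :=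
  (convex_closedBall a ε).set_average_mem Metric.isClosed_closedBall hPA₀ hPA
    (ae_restrict_of_forall_mem hA hga) hg

theorem Lp.dist_le_of_ae_dist_le {E : Type*} [NormedAddCommGroup E] {p : ℝ≥0∞} [Fact (1 ≤ p)]
    {μ : Measure α} [IsProbabilityMeasure μ] {F G : Lp E p μ} {ε : ℝ} (hε : 0 ≤ ε)
    (hFG : ∀ᵐ x ∂μ, dist (F x) (G x) ≤ ε) : dist F G ≤ ε := by
  rw [_root_.dist_eq_norm]
  refine (Lp.norm_le_of_ae_bound hε ?_).trans_eq (by simp [measureUnivNNReal])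
  filter_upwards [Lp.coeFn_sub F G, hFG] with x hsub hx
  rwa [hsub, Pi.sub_apply, ← _root_.dist_eq_norm]

theorem ridge_mem_closure_kernelRange {E : Type*} [NormedAddCommGroup E] [InnerProductSpace ℝ E]
    [MeasurableSpace E] [OpensMeasurableSpace E] {P : Measure Ω} [IsFiniteMeasure P]
    {μ : Measure E} [IsProbabilityMeasure μ] {K : Set E} (hK : IsCompact K)
    (hμK : ∀ᵐ x ∂μ, x ∈ K) {φ : ℝ → ℝ} (hφ : Continuous φ) {C : ℝ} (hφC : ∀ s, |φ s| ≤ C)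
    {w : Ω → E} (hw : Measurable w) [(P.map w).IsOpenPosMeasure]
    (hk : ∀ x, MemLp (fun c => φ ⟪w c, x⟫) 2 P) {u : E} {F : Lp ℝ 2 μ}
    (hF : F =ᵐ[μ] fun x => φ ⟪u, x⟫) :
    F ∈ closure (kernelRange P μ (fun c x => φ ⟪w c, x⟫) hk : Set (Lp ℝ 2 μ)) := by
  rw [Metric.mem_closure_iff]
  intro ε hε
  obtain ⟨V, hV, hVK⟩ := hK.mem_uniformity_of_prod (f := fun v x => φ ⟪v, x⟫) (s := univ)
    (by fun_prop) (mem_univ u) (Metric.dist_mem_uniformity (half_pos hε))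
  obtain ⟨U, hUV, hU, huU⟩ := mem_nhds_iff.1 (nhdsWithin_univ u ▸ hV)
  have hA : MeasurableSet (w ⁻¹' U) := hw hU.measurableSet
  have hPA : P (w ⁻¹' U) ≠ 0 := by
    rw [← Measure.map_apply hw hU.measurableSet]
    exact hU.measure_ne_zero _ ⟨u, huU⟩
  have hint (x : E) : IntegrableOn (fun c => φ ⟪w c, x⟫) (w ⁻¹' U) P :=
    ((hk x).integrable one_le_two).integrableOn
  set g : E → ℝ := fun x => ⨍ c in w ⁻¹' U, φ ⟪w c, x⟫ ∂P
  have hg_cont : Continuous g := by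
    simp only [g, setAverage_eq]
    exact continuous_const.mul (continuous_of_dominated (bound := fun _ => C)
      (fun x => (hint x).aestronglyMeasurable) (fun x => .of_forall fun c => hφC _)
      (integrable_const C) (.of_forall fun c => by fun_prop))
  have hg : MemLp g 2 μ := .of_bound hg_cont.aestronglyMeasurable C <| .of_forall fun x => by
    simpa using dist_setAverage_le hA hPA (measure_ne_top _ _) (hint x) (a := 0)
      fun c _ => by simpa using hφC _
  have hgF : ∀ᵐ x ∂μ, dist (F x) (g x) ≤ ε / 2 := by
    filter_upwards [hF, hμK] with x hFx hx
    rw [hFx, dist_comm]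
    exact dist_setAverage_le hA hPA (measure_ne_top _ _) (hint x)
      fun c hc => (hVK (w c) (hUV hc) x hx).le
  refine ⟨hg.toLp g, mem_kernelRange_of_ae_eq_setAverage hk hA (measure_ne_top _ _)
    hg.coeFn_toLp, ?_⟩
  calc dist F (hg.toLp g) ≤ ε / 2 := Lp.dist_le_of_ae_dist_le (half_pos hε).le <| by
        filter_upwards [hg.coeFn_toLp, hgF] with x hx hFx
        rwa [hx]
    _ < ε := half_lt_self hε

end MeasureTheory

theorem Submodule.dense_of_dense_span_of_subset_closure {R M : Type*} [Semiring R]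
    [AddCommMonoid M] [Module R M] [TopologicalSpace M] [ContinuousAdd M] [ContinuousConstSMul R M]
    {p : Submodule R M} {s : Set M} (hs : Dense (span R s : Set M))
    (hsp : s ⊆ closure (p : Set M)) : Dense (p : Set M) := by
  rw [← dense_closure, ← p.topologicalClosure_coe]
  exact hs.mono (span_le.2 (by rwa [p.topologicalClosure_coe]))

/-- base case of Step 2.  Under universal approximation for `φ₁`
and full support of `law(w₁)`, the range of
`𝓗₂ : f ↦ (x ↦ E_{C₁}[f(C₁) φ₁(⟨w₁(C₁), x⟩)])` is dense in `L²(μX)`. -/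
theorem two_layer_dense_range
    {Ω₁ : Type*} [MeasureSpace Ω₁] (P₁ : Measure Ω₁) [IsProbabilityMeasure P₁]
    (d : ℕ) (μX : Measure (EuclideanSpace ℝ (Fin d))) [IsProbabilityMeasure μX]
    (R : ℝ) (hbdd : ∀ᵐ x ∂μX, ‖x‖ ≤ R)
    (φ₁ : ℝ → ℝ) (hφc : Continuous φ₁) (hφb : ∃ C : ℝ, ∀ s, |φ₁ s| ≤ C)
    (hUAP : Dense (↑(Submodule.span ℝ
      {F : Lp ℝ 2 μX | ∃ u : EuclideanSpace ℝ (Fin d),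
        (F : EuclideanSpace ℝ (Fin d) → ℝ) =ᵐ[μX] fun x => φ₁ ⟪u, x⟫}) :
        Set (Lp ℝ 2 μX)))
    (w₁ : Ω₁ → EuclideanSpace ℝ (Fin d)) (hw₁ : Measurable w₁)
    (hsupp : ∀ U : Set (EuclideanSpace ℝ (Fin d)), IsOpen U → U.Nonempty →
      0 < (P₁.map w₁) U) :
    Dense {F : Lp ℝ 2 μX | ∃ f : Ω₁ → ℝ, MemLp f 2 P₁ ∧
      (F : EuclideanSpace ℝ (Fin d) → ℝ) =ᵐ[μX]
        fun x => ∫ c₁, f c₁ * φ₁ ⟪w₁ c₁, x⟫ ∂P₁} := by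
  obtain ⟨C, hC⟩ := hφb
  have : (P₁.map w₁).IsOpenPosMeasure := ⟨fun U hU hne => (hsupp U hU hne).ne'⟩
  have hk (x : EuclideanSpace ℝ (Fin d)) : MemLp (fun c => φ₁ ⟪w₁ c, x⟫) 2 P₁ :=
    .of_bound (by fun_prop) C (.of_forall fun c => hC _)
  refine (kernelRange P₁ μX _ hk).dense_of_dense_span_of_subset_closure hUAP ?_
  rintro F ⟨u, hF⟩
  exact ridge_mem_closure_kernelRange (isCompact_closedBall 0 R) (by simpa using hbdd) hφc hC
    hw₁ hk hF
end
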